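/- In CP + ⟨T ◁ x ▷ T = T⟩, the closed terms T ◁ a ▷ b and T ◁ b ▷ a (for distinct atoms a, b) are not provably equal. -/

import Mathlib

inductive CE (A : Type) : Type
  | tt : CE A
  | ff : CE A
  | atom : A → CE A
  | cond : CE A → CE A → CE A → CE A
inductive Deriv {A : Type} (Ax : CE A → CE A → Prop) : CE A → CE A → Prop
  | ax {t t'} : Ax t t' → Deriv Ax t t'
  | refl (t) : Deriv Ax t t
  | symm {t t'} : Deriv Ax t t' → Deriv Ax t' t
  | trans {t t' t''} : Deriv Ax t t' → Deriv Ax t' t'' → Deriv Ax t t''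
  | congr {x x' y y' z z'} : Deriv Ax x x' → Deriv Ax y y' → Deriv Ax z z' →
      Deriv Ax (.cond x y z) (.cond x' y' z')
  | cp1 (x y) : Deriv Ax (.cond x .tt y) x
  | cp2 (x y) : Deriv Ax (.cond x .ff y) y
  | cp3 (x) : Deriv Ax (.cond .tt x .ff) x
  | cp4 (x y z u v) : Deriv Ax (.cond x (.cond y z u) v) (.cond (.cond x y v) z (.cond x u v))

/-- Derivability from the CP axioms alone (no extra axioms). -/
def CP {A : Type} : CE A → CE A → Prop := Deriv (fun _ _ => False)

/-- The extra axiom scheme T ◁ x ▷ T = T. -/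
def AxOh {A : Type} : CE A → CE A → Prop :=
  fun s t => ∃ x : CE A, s = .cond .tt x .tt ∧ t = .tt

/-!
The model: a conditional expression denotes the binary decision tree that evaluates its atoms
from left to right, reduced so that no node has two equal subtrees. Reduction validates
`T ◁ x ▷ T = T`, and `x ◁ y ▷ z` grafts the trees of `x` and `z` onto the true and false leaves
of the tree of `y`, which validates the CP axioms. The tree of `T ◁ a ▷ b` queries `a` first and
then `b`, that of `T ◁ b ▷ a` the other way round.
-/

inductive DecTree (A : Type) : Type
  | leaf : Bool → DecTree A
  | node : A → DecTree A → DecTree A → DecTree A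
  deriving DecidableEq

namespace DecTree

variable {A : Type} [DecidableEq A]

def branch (a : A) (l r : DecTree A) : DecTree A :=
  if l = r then l else node a l r

def graft : DecTree A → DecTree A → DecTree A → DecTree A
  | leaf true, p, _ => p
  | leaf false, _, q => q
  | node a l r, p, q => branch a (l.graft p q) (r.graft p q)

def IsReduced : DecTree A → Prop
  | leaf _ => True
  | node _ l r => l ≠ r ∧ l.IsReduced ∧ r.IsReduced

@[simp]
theorem branch_self (a : A) (t : DecTree A) : branch a t t = t := by
  simp [branch]

theorem branch_of_ne {a : A} {l r : DecTree A} (h : l ≠ r) : branch a l r = node a l r :=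
  if_neg h

theorem graft_branch (a : A) (l r p q : DecTree A) :
    (branch a l r).graft p q = branch a (l.graft p q) (r.graft p q) := by
  by_cases h : l = r
  · subst h
    simp
  · rw [branch_of_ne h, graft]

@[simp]
theorem graft_self (t p : DecTree A) : t.graft p p = p := by
  induction t with
  | leaf b => cases b <;> rfl
  | node a l r ihl ihr => simp [graft, ihl, ihr]

theorem graft_graft (t p q p' q' : DecTree A) :
    (t.graft p q).graft p' q' = t.graft (p.graft p' q') (q.graft p' q') := by
  induction t with
  | leaf b => cases b <;> rfl
  | node a l r ihl ihr => simp only [graft, graft_branch, ihl, ihr]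

theorem IsReduced.branch (a : A) {l r : DecTree A} (hl : l.IsReduced) (hr : r.IsReduced) :
    (branch a l r).IsReduced := by
  by_cases h : l = r
  · subst h
    simpa using hl
  · rw [branch_of_ne h]
    exact ⟨h, hl, hr⟩

theorem IsReduced.graft {t p q : DecTree A} (ht : t.IsReduced) (hp : p.IsReduced)
    (hq : q.IsReduced) : (t.graft p q).IsReduced := by
  induction t with
  | leaf b => cases b <;> assumption
  | node a l r ihl ihr => exact IsReduced.branch a (ihl ht.2.1) (ihr ht.2.2)

theorem IsReduced.graft_leaf_true_leaf_false {t : DecTree A} (ht : t.IsReduced) :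
    t.graft (leaf true) (leaf false) = t := by
  induction t with
  | leaf b => cases b <;> rfl
  | node a l r ihl ihr =>
    rw [DecTree.graft, ihl ht.2.1, ihr ht.2.2, branch_of_ne ht.1]

end DecTree

open DecTree

variable {A : Type} [DecidableEq A]

def CE.eval : CE A → DecTree A
  | .tt => leaf true
  | .ff => leaf false
  | .atom a => node a (leaf true) (leaf false)
  | .cond x y z => y.eval.graft x.eval z.eval

theorem CE.isReduced_eval (t : CE A) : t.eval.IsReduced := by
  induction t with
  | tt => trivial
  | ff => trivial
  | atom a => exact ⟨by simp, trivial, trivial⟩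
  | cond x y z ihx ihy ihz => exact ihy.graft ihx ihz

theorem CE.eval_eq_of_deriv {Ax : CE A → CE A → Prop} (hAx : ∀ s t, Ax s t → s.eval = t.eval)
    {s t : CE A} (h : Deriv Ax s t) : s.eval = t.eval := by
  induction h with
  | ax hst => exact hAx _ _ hst
  | refl t => rfl
  | symm _ ih => exact ih.symm
  | trans _ _ ih₁ ih₂ => exact ih₁.trans ih₂
  | congr _ _ _ ihx ihy ihz => simp only [eval, ihx, ihy, ihz]
  | cp1 x y => rfl
  | cp2 x y => rfl
  | cp3 x => exact x.isReduced_eval.graft_leaf_true_leaf_false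
  | cp4 x y z u v => exact graft_graft _ _ _ _ _

theorem CE.eval_eq_of_axOh {s t : CE A} (h : AxOh s t) : s.eval = t.eval := by
  obtain ⟨x, rfl, rfl⟩ := h
  exact graft_self _ _

theorem CE.eval_cond_tt_atom_atom (a b : A) :
    (CE.cond .tt (.atom a) (.atom b)).eval =
      node a (leaf true) (node b (leaf true) (leaf false)) := by
  simp [CE.eval, graft, branch]

theorem not_provable_swap (A : Type) (a b : A) (hab : a ≠ b) :
    ¬ Deriv AxOh (.cond (CE.tt : CE A) (.atom a) (.atom b)) (.cond CE.tt (.atom b) (.atom a)) := by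
  classical
  intro h
  have heval := CE.eval_eq_of_deriv (fun _ _ => CE.eval_eq_of_axOh) h
  rw [CE.eval_cond_tt_atom_atom, CE.eval_cond_tt_atom_atom] at heval
  exact hab (node.inj heval).1
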